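/- Let S be a partially ordered set with a simply connected extension (∼_u, ∼_l), and let a ≠ b in S. Then each equivalence class of the relation O_{a,b} on B_{a,b} is totally ordered by the original partial order <; moreover, if x, y ∈ B_{a,b} with x O_{a,b} y and z ∈ B_{x,y}, then z ∈ B_{a,b} and z O_{a,b} x. -/

import Mathlib

open Pointwise

namespace PaperSC

variable {S : Type*}

/-- Exactly one of four propositions holds. -/
def ExactlyOne4 (p q r s : Prop) : Prop :=
  (p ∨ q ∨ r ∨ s) ∧ (p → ¬q ∧ ¬r ∧ ¬s) ∧ (q → ¬r ∧ ¬s) ∧ (r → ¬s)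

/-- `x` and `y` are incomparable with respect to the strict order `lt`. -/
def Incomp (lt : S → S → Prop) (x y : S) : Prop :=
  x ≠ y ∧ ¬ lt x y ∧ ¬ lt y x

/-- The reflexive closure of `lt`. -/
def Le' (lt : S → S → Prop) (x y : S) : Prop := x = y ∨ lt x y

/-- `x ∼ᵤ y` : `x` and `y` are incomparable and have a common upper bound. -/
def SimU (lt : S → S → Prop) (x y : S) : Prop :=
  Incomp lt x y ∧ ∃ z, Le' lt x z ∧ Le' lt y z

/-- `x ∼ₗ y` : `x` and `y` are incomparable and have a common lower bound. -/
def SimL (lt : S → S → Prop) (x y : S) : Prop :=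
  Incomp lt x y ∧ ∃ z, Le' lt z x ∧ Le' lt z y

/-- Every incomparable pair has a common upper bound or a common lower bound. -/
def StronglyConnectedRel (lt : S → S → Prop) : Prop :=
  ∀ x y, Incomp lt x y → SimU lt x y ∨ SimL lt x y

/-- Acyclicity: `x ∼ᵤ y` and `x ∼ₗ z` imply `y < z`. -/
def AcyclicRel (lt : S → S → Prop) : Prop :=
  ∀ x y z, SimU lt x y → SimL lt x z → lt y z

/-- `(u, l)` is a simply connected extension of the strict partial order `lt`. -/
structure IsSCExt (lt u l : S → S → Prop) : Prop where
  u_symm : ∀ x y, u x y → u y x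
  l_symm : ∀ x y, l x y → l y x
  exactly_one : ∀ x y, x ≠ y → ExactlyOne4 (lt x y) (lt y x) (u x y) (l x y)
  u_of_ub : ∀ x y, Incomp lt x y → (∃ z, Le' lt x z ∧ Le' lt y z) → u x y
  l_of_lb : ∀ x y, Incomp lt x y → (∃ z, Le' lt z x ∧ Le' lt z y) → l x y
  acyclic : ∀ x y z, u x y → l x z → lt y z

/-- `b` is between `a` and `c` (with respect to `lt` and the extension `(u, l)`). -/
def Btwn (lt u l : S → S → Prop) (a c b : S) : Prop :=
  (lt a c ∧ ((lt a b ∧ lt b c) ∨ (u a b ∧ l b c))) ∨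
  (lt c a ∧ ((lt c b ∧ lt b a) ∨ (u c b ∧ l b a))) ∨
  (l a c ∧ ((l a b ∧ lt b c) ∨ (l c b ∧ lt b a))) ∨
  (u a c ∧ ((u a b ∧ lt c b) ∨ (u c b ∧ lt a b)))

/-- The between set `B_{a,b}`; it equals `{a}` when `a = b`. -/
def BSet (lt u l : S → S → Prop) (a b : S) : Set S :=
  {a, b} ∪ {x | a ≠ b ∧ Btwn lt u l a b x}

/-- The set `A` is totally ordered by `lt`. -/
def IsChainRel (lt : S → S → Prop) (A : Set S) : Prop :=
  ∀ p ∈ A, ∀ q ∈ A, p = q ∨ lt p q ∨ lt q p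

/-- `x O y` iff `B_{x,y}` is totally ordered by `lt`. -/
def ORel (lt u l : S → S → Prop) (x y : S) : Prop :=
  IsChainRel lt (BSet lt u l x y)

/-- The extension is rectifiable: every between set is a finite union of `O`-classes. -/
def Rectifiable (lt u l : S → S → Prop) : Prop :=
  ∀ a b : S, a ≠ b → ∃ F : Finset S,
    (↑F : Set S) ⊆ BSet lt u l a b ∧
    ∀ x ∈ BSet lt u l a b, ∃ c ∈ F, ORel lt u l x c

/-!
For `a ≠ b` the between set `B_{a,b}` is the union of two order-convex chains with no element
of one comparable to an element of the other: for `a < b` the interval `[a, b]` and the bridge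
`{w | a ∼ᵤ w ∧ w ∼ₗ b}`, for `a ∼ₗ b` the branches `{w | a ∼ₗ w ∧ w ≤ b}` and
`{w | b ∼ₗ w ∧ w ≤ a}`. The other cases follow by exchanging `a` and `b`, or by reversing the
order, which exchanges `∼ᵤ` and `∼ₗ` and fixes every between set. Hence comparability is
transitive on `B_{a,b}`, so every `O`-class is a chain, and `B_{a,b}` is order-convex. If `x O y`
with `x < y`, the chain `B_{x,y}` is the interval `[x, y] ⊆ B_{a,b}`, and for `x < z < y` every
bridge of `(x, z)` is a bridge of `(x, y)`, so `B_{x,z} ⊆ B_{x,y}` is a chain as well.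
-/

open Function

section
variable {lt u l : S → S → Prop} {A B : Set S} {x y z : S}

def Comparable (lt : S → S → Prop) (x y : S) : Prop := x = y ∨ lt x y ∨ lt y x

theorem Comparable.symm (h : Comparable lt x y) : Comparable lt y x := by
  rcases h with rfl | hxy | hyx
  exacts [Or.inl rfl, Or.inr (Or.inr hxy), Or.inr (Or.inl hyx)]

theorem not_comparable_iff : ¬ Comparable lt x y ↔ Incomp lt x y := by
  simp only [Comparable, Incomp, not_or]

def OrdConnectedRel (lt : S → S → Prop) (A : Set S) : Prop :=
  ∀ x ∈ A, ∀ y ∈ A, ∀ z, lt x z → lt z y → z ∈ A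

theorem lt_of_le'_of_lt [IsTrans S lt] (hxy : Le' lt x y) (hyz : lt y z) : lt x z := by
  rcases hxy with rfl | hxy
  exacts [hyz, _root_.trans hxy hyz]

theorem lt_of_lt_of_le' [IsTrans S lt] (hxy : lt x y) (hyz : Le' lt y z) : lt x z := by
  rcases hyz with rfl | hyz
  exacts [hxy, _root_.trans hxy hyz]

theorem le'_swap : Le' (swap lt) x y ↔ Le' lt y x := by
  simp only [Le', swap, eq_comm]

theorem isChainRel_swap : IsChainRel (swap lt) A ↔ IsChainRel lt A :=
  ⟨fun hA p hp q hq => (hA p hp q hq).imp_right Or.symm,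
    fun hA p hp q hq => (hA p hp q hq).imp_right Or.symm⟩

theorem eq_of_mem_BSet_self (hz : z ∈ BSet lt u l x x) : z = x := by
  rcases hz with hz | ⟨hne, -⟩
  · simpa using hz
  · exact absurd rfl hne

theorem left_mem_BSet : x ∈ BSet lt u l x y := Or.inl (Or.inl rfl)

theorem right_mem_BSet : y ∈ BSet lt u l x y := Or.inl (Or.inr rfl)

theorem IsChainRel.mono (hB : IsChainRel lt B) (hAB : A ⊆ B) : IsChainRel lt A :=
  fun p hp q hq => hB p (hAB hp) q (hAB hq)

theorem oRel_self : ORel lt u l x x :=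
  fun _ hp _ hq => Or.inl ((eq_of_mem_BSet_self hp).trans (eq_of_mem_BSet_self hq).symm)

theorem ORel.comparable (hO : ORel lt u l x y) : Comparable lt x y :=
  hO x left_mem_BSet y right_mem_BSet

end

section
variable {lt : S → S → Prop} {p q r x y : S}

structure IsChainPair (lt : S → S → Prop) (P Q : Set S) : Prop where
  isChainRel_left : IsChainRel lt P
  isChainRel_right : IsChainRel lt Q
  ordConnected_left : OrdConnectedRel lt P
  ordConnected_right : OrdConnectedRel lt Q
  incomp : ∀ p ∈ P, ∀ q ∈ Q, Incomp lt p q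

namespace IsChainPair
variable {P Q : Set S}

theorem symm (hPQ : IsChainPair lt P Q) : IsChainPair lt Q P where
  isChainRel_left := hPQ.isChainRel_right
  isChainRel_right := hPQ.isChainRel_left
  ordConnected_left := hPQ.ordConnected_right
  ordConnected_right := hPQ.ordConnected_left
  incomp q hq p hp := ⟨(hPQ.incomp p hp q hq).1.symm, (hPQ.incomp p hp q hq).2.2,
    (hPQ.incomp p hp q hq).2.1⟩

theorem swap (hPQ : IsChainPair lt P Q) : IsChainPair (swap lt) P Q where
  isChainRel_left := isChainRel_swap.2 hPQ.isChainRel_left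
  isChainRel_right := isChainRel_swap.2 hPQ.isChainRel_right
  ordConnected_left x hx y hy z hxz hzy := hPQ.ordConnected_left y hy x hx z hzy hxz
  ordConnected_right x hx y hy z hxz hzy := hPQ.ordConnected_right y hy x hx z hzy hxz
  incomp p hp q hq := ⟨(hPQ.incomp p hp q hq).1, (hPQ.incomp p hp q hq).2.2,
    (hPQ.incomp p hp q hq).2.1⟩

theorem mem_left_of_comparable (hPQ : IsChainPair lt P Q) (hx : x ∈ P) (hy : y ∈ P ∪ Q)
    (hxy : Comparable lt x y) : y ∈ P :=
  hy.resolve_right fun hyQ => not_comparable_iff.2 (hPQ.incomp x hx y hyQ) hxy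

theorem comparable_trans (hPQ : IsChainPair lt P Q) (hp : p ∈ P ∪ Q) (hq : q ∈ P ∪ Q)
    (hr : r ∈ P ∪ Q) (hpq : Comparable lt p q) (hqr : Comparable lt q r) :
    Comparable lt p r := by
  wlog hpP : p ∈ P generalizing P Q
  · rw [Set.union_comm] at hp hq hr
    exact this hPQ.symm hp hq hr (hp.resolve_right hpP)
  have hqP := hPQ.mem_left_of_comparable hpP hq hpq
  exact hPQ.isChainRel_left p hpP r (hPQ.mem_left_of_comparable hqP hr hqr)

theorem ordConnected [IsTrans S lt] (hPQ : IsChainPair lt P Q) :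
    OrdConnectedRel lt (P ∪ Q) := by
  intro x hx y hy z hxz hzy
  wlog hxP : x ∈ P generalizing P Q
  · rw [Set.union_comm] at hx hy ⊢
    exact this hPQ.symm hx hy (hx.resolve_right hxP)
  have hyP := hPQ.mem_left_of_comparable hxP hy (Or.inr (Or.inl (_root_.trans hxz hzy)))
  exact Or.inl (hPQ.ordConnected_left x hxP y hyP z hxz hzy)

theorem isChainRel_setOf_oRel {u l : S → S → Prop}
    (hPQ : IsChainPair lt P Q) (hx : x ∈ P ∪ Q) :
    IsChainRel lt {y | y ∈ P ∪ Q ∧ ORel lt u l x y} :=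
  fun _ hp _ hq => hPQ.comparable_trans hp.1 hx hq.1 hp.2.comparable.symm hq.2.comparable

end IsChainPair

end

namespace IsSCExt
variable {lt u l : S → S → Prop} {a b p q w x y z : S}

theorem not_u_of_l (h : IsSCExt lt u l) (hne : x ≠ y) (hl : l x y) : ¬ u x y :=
  fun hu => (h.exactly_one x y hne).2.2.2 hu hl

theorem cases (h : IsSCExt lt u l) (hne : x ≠ y) : lt x y ∨ lt y x ∨ u x y ∨ l x y :=
  (h.exactly_one x y hne).1

theorem btwn_comm (h : IsSCExt lt u l) : Btwn lt u l a b w ↔ Btwn lt u l b a w := by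
  have := h.u_symm
  have := h.l_symm
  unfold Btwn
  grind

theorem BSet_comm (h : IsSCExt lt u l) (a b : S) : BSet lt u l a b = BSet lt u l b a := by
  ext w
  simp only [BSet, Set.mem_union, Set.mem_insert_iff, Set.mem_singleton_iff, Set.mem_ofPred_eq,
    ne_comm (a := a), h.btwn_comm (a := a), or_comm (a := w = a)]

theorem dual (h : IsSCExt lt u l) : IsSCExt (swap lt) l u where
  u_symm := h.l_symm
  l_symm := h.u_symm
  exactly_one x y hne := by
    have := h.exactly_one x y hne
    unfold ExactlyOne4 at this ⊢
    tauto
  u_of_ub x y hinc := fun ⟨z, hxz, hyz⟩ =>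
    h.l_of_lb x y ⟨hinc.1, hinc.2.2, hinc.2.1⟩ ⟨z, le'_swap.1 hxz, le'_swap.1 hyz⟩
  l_of_lb x y hinc := fun ⟨z, hzx, hzy⟩ =>
    h.u_of_ub x y ⟨hinc.1, hinc.2.2, hinc.2.1⟩ ⟨z, le'_swap.1 hzx, le'_swap.1 hzy⟩
  acyclic x y z hl hu := h.acyclic x z y hu hl

theorem btwn_swap (h : IsSCExt lt u l) : Btwn (swap lt) l u a b w ↔ Btwn lt u l a b w := by
  have := h.u_symm
  have := h.l_symm
  unfold Btwn swap
  grind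

theorem BSet_swap (h : IsSCExt lt u l) (a b : S) : BSet (swap lt) l u a b = BSet lt u l a b := by
  ext w
  simp only [BSet, Set.mem_union, Set.mem_ofPred_eq, h.btwn_swap]

theorem not_lt_of_u [Std.Irrefl lt] (h : IsSCExt lt u l) (hu : u x y) : ¬ lt x y :=
  fun hxy => ((h.exactly_one x y (ne_of_irrefl hxy)).2.1 hxy).2.1 hu

theorem not_lt_of_l [Std.Irrefl lt] (h : IsSCExt lt u l) (hl : l x y) : ¬ lt x y :=
  fun hxy => ((h.exactly_one x y (ne_of_irrefl hxy)).2.1 hxy).2.2 hl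

theorem not_lt_of_u' [Std.Irrefl lt] (h : IsSCExt lt u l) (hu : u x y) : ¬ lt y x :=
  h.not_lt_of_u (h.u_symm x y hu)

theorem not_lt_of_l' [Std.Irrefl lt] (h : IsSCExt lt u l) (hl : l x y) : ¬ lt y x :=
  h.not_lt_of_l (h.l_symm x y hl)

theorem comparable_of_bounds (h : IsSCExt lt u l) {c d : S} (hcp : Le' lt c p)
    (hcq : Le' lt c q) (hpd : Le' lt p d) (hqd : Le' lt q d) : Comparable lt p q := by
  by_contra hpq
  have hinc := not_comparable_iff.1 hpq
  exact h.not_u_of_l hinc.1 (h.l_of_lb p q hinc ⟨c, hcp, hcq⟩) (h.u_of_ub p q hinc ⟨d, hpd, hqd⟩)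

theorem eq_of_l_of_lt_of_lt [Std.Irrefl lt] (h : IsSCExt lt u l) {r : S} (hl : l p q)
    (hpr : lt p r) (hqr : lt q r) : p = q := by
  by_contra hne
  have hinc : Incomp lt p q := ⟨hne, h.not_lt_of_l hl, h.not_lt_of_l' hl⟩
  exact h.not_u_of_l hne hl (h.u_of_ub p q hinc ⟨r, Or.inr hpr, Or.inr hqr⟩)

theorem u_of_u_of_lt [IsStrictOrder S lt] (h : IsSCExt lt u l) (hay : u a y) (hzy : lt z y)
    (hza : ¬ lt z a) : u a z := by
  have hne : a ≠ z := by
    rintro rfl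
    exact h.not_lt_of_u hay hzy
  rcases h.cases hne with haz | hza' | hu | hl
  · exact absurd (_root_.trans haz hzy) (h.not_lt_of_u hay)
  · exact absurd hza' hza
  · exact hu
  · exact absurd (h.acyclic a y z hay hl) (asymm hzy)

theorem l_of_l_of_lt [IsStrictOrder S lt] (h : IsSCExt lt u l) (hax : l a x) (hxz : lt x z)
    (haz : ¬ lt a z) : l a z :=
  h.dual.u_of_u_of_lt hax hxz haz

theorem BSet_eq_of_lt [IsStrictOrder S lt] (h : IsSCExt lt u l) (hab : lt a b) :
    BSet lt u l a b = {w | Le' lt a w ∧ Le' lt w b} ∪ {w | u a w ∧ l w b} := by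
  have hne := ne_of_irrefl hab
  have hl : ¬ l a b := fun hl => h.not_lt_of_l hl hab
  have hu : ¬ u a b := fun hu => h.not_lt_of_u hu hab
  ext w
  simp only [BSet, Btwn, Le', Set.mem_union, Set.mem_insert_iff, Set.mem_singleton_iff,
    Set.mem_ofPred_eq, hab, asymm hab, hl, hu, ne_eq, hne, not_false_eq_true, true_and,
    false_and, or_false]
  constructor
  · rintro ((rfl | rfl) | hw | hw)
    exacts [Or.inl ⟨Or.inl rfl, Or.inr hab⟩, Or.inl ⟨Or.inr hab, Or.inl rfl⟩,
      Or.inl ⟨Or.inr hw.1, Or.inr hw.2⟩, Or.inr hw]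
  · rintro (⟨rfl | haw, rfl | hwb⟩ | hw)
    exacts [Or.inl (Or.inl rfl), Or.inl (Or.inl rfl), Or.inl (Or.inr rfl),
      Or.inr (Or.inl ⟨haw, hwb⟩), Or.inr (Or.inr hw)]

theorem isChainPair_of_lt [IsStrictOrder S lt] (h : IsSCExt lt u l) (hab : lt a b) :
    IsChainPair lt {w | Le' lt a w ∧ Le' lt w b} {w | u a w ∧ l w b} where
  isChainRel_left p hp q hq := h.comparable_of_bounds hp.1 hq.1 hp.2 hq.2
  isChainRel_right p hp q hq := by
    by_contra hpq
    rcases h.cases (not_comparable_iff.1 hpq).1 with hlt | hlt | hu | hl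
    · exact hpq (Or.inr (Or.inl hlt))
    · exact hpq (Or.inr (Or.inr hlt))
    · exact h.not_lt_of_l hq.2 (h.acyclic p q b hu hp.2)
    · exact h.not_lt_of_u hq.1 (h.acyclic p a q (h.u_symm a p hp.1) hl)
  ordConnected_left x hx y hy z hxz hzy :=
    ⟨Or.inr (lt_of_le'_of_lt hx.1 hxz), Or.inr (lt_of_lt_of_le' hzy hy.2)⟩
  ordConnected_right x hx y hy z hxz hzy :=
    ⟨h.u_of_u_of_lt hy.1 hzy fun hza => h.not_lt_of_u' hx.1 (_root_.trans hxz hza),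
      h.l_symm b z (h.l_of_l_of_lt (h.l_symm x b hx.2) hxz
        fun hbz => h.not_lt_of_l' hy.2 (_root_.trans hbz hzy))⟩
  incomp p hp q hq := by
    refine ⟨?_, fun hpq => h.not_lt_of_u hq.1 (lt_of_le'_of_lt hp.1 hpq),
      fun hqp => h.not_lt_of_l hq.2 (lt_of_lt_of_le' hqp hp.2)⟩
    rintro rfl
    rcases hp.1 with rfl | hap
    exacts [h.not_lt_of_l hq.2 hab, h.not_lt_of_u hq.1 hap]

theorem BSet_eq_of_l [IsStrictOrder S lt] (h : IsSCExt lt u l) (hne : a ≠ b) (hab : l a b) :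
    BSet lt u l a b = {w | l a w ∧ Le' lt w b} ∪ {w | l b w ∧ Le' lt w a} := by
  ext w
  simp only [BSet, Btwn, Le', Set.mem_union, Set.mem_insert_iff, Set.mem_singleton_iff,
    Set.mem_ofPred_eq, h.not_lt_of_l hab, h.not_lt_of_l' hab, h.not_u_of_l hne hab, hab, ne_eq,
    hne, not_false_eq_true, true_and, false_and, or_false, false_or]
  constructor
  · rintro ((rfl | rfl) | hw | hw)
    exacts [Or.inr ⟨h.l_symm w b hab, Or.inl rfl⟩, Or.inl ⟨hab, Or.inl rfl⟩,
      Or.inl ⟨hw.1, Or.inr hw.2⟩, Or.inr ⟨hw.1, Or.inr hw.2⟩]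
  · rintro (⟨hw, rfl | hwb⟩ | ⟨hw, rfl | hwa⟩)
    exacts [Or.inl (Or.inr rfl), Or.inr (Or.inl ⟨hw, hwb⟩), Or.inl (Or.inl rfl),
      Or.inr (Or.inr ⟨hw, hwa⟩)]

theorem isChainRel_setOf_l_le' [Std.Irrefl lt] (h : IsSCExt lt u l) :
    IsChainRel lt {w | l a w ∧ Le' lt w b} := by
  intro p hp q hq
  by_contra hpq
  have hu := h.u_of_ub p q (not_comparable_iff.1 hpq) ⟨b, hp.2, hq.2⟩
  exact h.not_lt_of_l' hq.1 (h.acyclic p q a hu (h.l_symm a p hp.1))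

theorem ordConnected_setOf_l_le' [IsStrictOrder S lt] (h : IsSCExt lt u l) (hab : l a b) :
    OrdConnectedRel lt {w | l a w ∧ Le' lt w b} := by
  intro x hx y hy z hxz hzy
  have hzb := lt_of_lt_of_le' hzy hy.2
  exact ⟨h.l_of_l_of_lt hx.1 hxz fun haz => h.not_lt_of_l hab (_root_.trans haz hzb), Or.inr hzb⟩

theorem isChainPair_of_l [IsStrictOrder S lt] (h : IsSCExt lt u l) (hne : a ≠ b) (hab : l a b) :
    IsChainPair lt {w | l a w ∧ Le' lt w b} {w | l b w ∧ Le' lt w a} where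
  isChainRel_left := h.isChainRel_setOf_l_le'
  isChainRel_right := h.isChainRel_setOf_l_le'
  ordConnected_left := h.ordConnected_setOf_l_le' hab
  ordConnected_right := h.ordConnected_setOf_l_le' (h.l_symm a b hab)
  incomp p hp q hq := by
    refine ⟨?_, fun hpq => h.not_lt_of_l' hp.1 (lt_of_lt_of_le' hpq hq.2),
      fun hqp => h.not_lt_of_l' hq.1 (lt_of_lt_of_le' hqp hp.2)⟩
    rintro rfl
    rcases hq.2 with rfl | hpa
    · rcases hp.2 with rfl | hab'
      exacts [hne rfl, h.not_lt_of_l hab hab']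
    · exact h.not_lt_of_l' hp.1 hpa

theorem exists_isChainPair_BSet [IsStrictOrder S lt] (h : IsSCExt lt u l) (hne : a ≠ b) :
    ∃ P Q, BSet lt u l a b = P ∪ Q ∧ IsChainPair lt P Q := by
  rcases h.cases hne with hab | hba | hu | hl
  · exact ⟨_, _, h.BSet_eq_of_lt hab, h.isChainPair_of_lt hab⟩
  · exact ⟨_, _, (h.BSet_comm a b).trans (h.BSet_eq_of_lt hba), h.isChainPair_of_lt hba⟩
  · exact ⟨_, _, (h.BSet_swap a b).symm.trans (h.dual.BSet_eq_of_l hne hu),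
      (h.dual.isChainPair_of_l hne hu).swap⟩
  · exact ⟨_, _, h.BSet_eq_of_l hne hl, h.isChainPair_of_l hne hl⟩

end IsSCExt

section
variable {lt u l : S → S → Prop} {B : Set S} {x y z : S}

theorem ORel.symm (hO : ORel lt u l x y) (h : IsSCExt lt u l) : ORel lt u l y x := by
  rwa [ORel, ← h.BSet_comm]

theorem IsSCExt.oRel_swap (h : IsSCExt lt u l) : ORel (swap lt) l u x y ↔ ORel lt u l x y := by
  rw [ORel, ORel, h.BSet_swap]
  exact isChainRel_swap

variable [IsStrictOrder S lt]

theorem IsSCExt.BSet_subset_of_lt_of_lt (h : IsSCExt lt u l) (hxz : lt x z) (hzy : lt z y) :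
    BSet lt u l x z ⊆ BSet lt u l x y := by
  rw [h.BSet_eq_of_lt hxz, h.BSet_eq_of_lt (_root_.trans hxz hzy)]
  rintro w (⟨hxw, hwz⟩ | ⟨hxw, hwz⟩)
  · exact Or.inl ⟨hxw, Or.inr (lt_of_le'_of_lt hwz hzy)⟩
  · refine Or.inr ⟨hxw, h.l_of_l_of_lt hwz hzy fun hwy => ?_⟩
    obtain rfl := h.eq_of_l_of_lt_of_lt hwz hwy hzy
    exact h.not_lt_of_u hxw hxz

theorem ORel.left_of_lt_of_lt (hO : ORel lt u l x y) (h : IsSCExt lt u l) (hxz : lt x z)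
    (hzy : lt z y) : ORel lt u l x z :=
  IsChainRel.mono hO (h.BSet_subset_of_lt_of_lt hxz hzy)

theorem ORel.right_of_lt_of_lt (hO : ORel lt u l x y) (h : IsSCExt lt u l) (hxz : lt x z)
    (hzy : lt z y) : ORel lt u l z y :=
  (h.oRel_swap.1 ((h.oRel_swap.2 (hO.symm h)).left_of_lt_of_lt h.dual hzy hxz)).symm h

theorem ORel.le'_of_mem_BSet (hO : ORel lt u l x y) (h : IsSCExt lt u l) (hxy : lt x y)
    (hz : z ∈ BSet lt u l x y) : Le' lt x z ∧ Le' lt z y := by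
  have hxz := hO x left_mem_BSet z hz
  rw [h.BSet_eq_of_lt hxy] at hz
  refine hz.resolve_right fun hzQ => not_comparable_iff.2 ?_ hxz
  exact (h.isChainPair_of_lt hxy).incomp x ⟨Or.inl rfl, Or.inr hxy⟩ z hzQ

theorem ORel.mem_and_oRel_of_mem_BSet (hO : ORel lt u l x y) (h : IsSCExt lt u l)
    (hB : OrdConnectedRel lt B) (hx : x ∈ B) (hy : y ∈ B) (hz : z ∈ BSet lt u l x y) :
    z ∈ B ∧ ORel lt u l z x := by
  rcases hO.comparable with rfl | hxy | hyx
  · rw [eq_of_mem_BSet_self hz]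
    exact ⟨hx, oRel_self⟩
  · obtain ⟨rfl | hxz, rfl | hzy⟩ := hO.le'_of_mem_BSet h hxy hz
    · exact ⟨hx, oRel_self⟩
    · exact ⟨hx, oRel_self⟩
    · exact ⟨hy, hO.symm h⟩
    · exact ⟨hB x hx y hy z hxz hzy, (hO.left_of_lt_of_lt h hxz hzy).symm h⟩
  · rw [h.BSet_comm] at hz
    obtain ⟨rfl | hyz, rfl | hzx⟩ := (hO.symm h).le'_of_mem_BSet h hyx hz
    · exact ⟨hx, oRel_self⟩
    · exact ⟨hy, hO.symm h⟩
    · exact ⟨hx, oRel_self⟩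
    · exact ⟨hB y hy x hx z hyz hzx, (hO.symm h).right_of_lt_of_lt h hyz hzx⟩

end

/-- Each `O_{a,b}`-equivalence class in `B_{a,b}` is totally ordered by `<`;
moreover if `x O_{a,b} y` and `z ∈ B_{x,y}` then `z ∈ B_{a,b}` and `z O_{a,b} x`. -/
theorem stmt9 {S : Type*} [PartialOrder S] (u l : S → S → Prop)
    (hsce : IsSCExt ((· < ·) : S → S → Prop) u l) (a b : S) (hab : a ≠ b) :
    (∀ x ∈ BSet ((· < ·) : S → S → Prop) u l a b,
      IsChainRel ((· < ·) : S → S → Prop)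
        {y | y ∈ BSet ((· < ·) : S → S → Prop) u l a b ∧
          ORel ((· < ·) : S → S → Prop) u l x y}) ∧
    (∀ x ∈ BSet ((· < ·) : S → S → Prop) u l a b,
      ∀ y ∈ BSet ((· < ·) : S → S → Prop) u l a b,
        ORel ((· < ·) : S → S → Prop) u l x y →
          ∀ z ∈ BSet ((· < ·) : S → S → Prop) u l x y,
            z ∈ BSet ((· < ·) : S → S → Prop) u l a b ∧
              ORel ((· < ·) : S → S → Prop) u l z x) := by
  obtain ⟨P, Q, hB, hPQ⟩ := hsce.exists_isChainPair_BSet hab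
  rw [hB]
  exact ⟨fun x hx => hPQ.isChainRel_setOf_oRel hx,
    fun x hx y hy hO z hz => hO.mem_and_oRel_of_mem_BSet hsce hPQ.ordConnected hx hy hz⟩

end PaperSC
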